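/- Consider A_1 = [[0,1,0],[0,0,1],[0,0,0]] and A_2 = [[0,0,0],[0,0,0],[1,0,0]]. Then the joint spectral radius satisfies ρ_d(A_1, A_2) = 1, while ρ_p(ν, P, (A_1,A_2)) = 0 for every 2×2 stochastic matrix P and every invariant probability ν for P; in particular ρ_p((A_1,A_2)) = 0 < ρ_d((A_1,A_2)). -/

import Mathlib

open scoped BigOperators

noncomputable section
namespace JSRpaper

attribute [local instance] Matrix.linftyOpNormedRing

/-- Spectral radius of a real matrix: maximum modulus of its complex eigenvalues. -/
def specRad {n : Type*} [Fintype n] [DecidableEq n] (M : Matrix n n ℝ) : ℝ :=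
  ⨆ μ ∈ spectrum ℂ (M.map (algebraMap ℝ ℂ)), ‖μ‖

/-- Product `A_{i_n} ⋯ A_{i_1}` along the word `w = (i_1, …, i_n)`. -/
def prodW {d : ℕ} {ι : Type*} {n : ℕ} (A : ι → Matrix (Fin d) (Fin d) ℝ)
    (w : Fin n → ι) : Matrix (Fin d) (Fin d) ℝ :=
  ((List.ofFn w).map A).reverse.prod

/-- Deterministic joint spectral radius. -/
def jsr {d : ℕ} {ι : Type*} [Fintype ι] (A : ι → Matrix (Fin d) (Fin d) ℝ) : ℝ :=
  ⨅ n : ℕ, ⨆ w : Fin (n + 1) → ι, ‖prodW A w‖ ^ (((n : ℝ) + 1)⁻¹)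

def IsStochastic {ι : Type*} [Fintype ι] (P : Matrix ι ι ℝ) : Prop :=
  (∀ i j, 0 ≤ P i j) ∧ ∀ i, ∑ j, P i j = 1

def IsInvProb {ι : Type*} [Fintype ι] (ν : ι → ℝ) (P : Matrix ι ι ℝ) : Prop :=
  (∀ i, 0 ≤ ν i) ∧ (∑ i, ν i = 1) ∧ ∀ j, ∑ i, ν i * P i j = ν j

/-- Markov weight `ν_{i_1} p_{i_1 i_2} ⋯ p_{i_n i_{n+1}}` of the word `w = (i_1, …, i_{n+1})`. -/
def chainWt {ι : Type*} [Fintype ι] (ν : ι → ℝ) (P : Matrix ι ι ℝ) {n : ℕ}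
    (w : Fin (n + 1) → ι) : ℝ :=
  ν (w 0) * ∏ t : Fin n, P (w t.castSucc) (w t.succ)

/-- Probabilistic joint spectral radius associated with the Markov chain `(ν, P)`. -/
def rhoP {d : ℕ} {ι : Type*} [Fintype ι] [DecidableEq ι] (ν : ι → ℝ) (P : Matrix ι ι ℝ)
    (A : ι → Matrix (Fin d) (Fin d) ℝ) : ℝ :=
  Filter.atTop.limsup fun n : ℕ =>
    ∑ w : Fin (n + 1) → ι, chainWt ν P w * ‖prodW A w‖ ^ (((n : ℝ) + 1)⁻¹)

/-- `ρ_p(P, A)`: supremum over invariant probabilities of `P`. -/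
def rhoPP {d : ℕ} {ι : Type*} [Fintype ι] [DecidableEq ι] (P : Matrix ι ι ℝ)
    (A : ι → Matrix (Fin d) (Fin d) ℝ) : ℝ :=
  sSup {r | ∃ ν, IsInvProb ν P ∧ r = rhoP ν P A}

/-- `ρ_p(A)`: supremum over all pairs `(ν, P)`. -/
def rhoPsup {d : ℕ} {ι : Type*} [Fintype ι] [DecidableEq ι]
    (A : ι → Matrix (Fin d) (Fin d) ℝ) : ℝ :=
  sSup {r | ∃ ν P, IsStochastic P ∧ IsInvProb ν P ∧ r = rhoP ν P A}

/-- `(i_1, …, i_{k+1})` is a `P`-word. -/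
def IsPWord {ι : Type*} (P : Matrix ι ι ℝ) {k : ℕ} (w : Fin (k + 1) → ι) : Prop :=
  ∀ t : Fin k, 0 < P (w t.castSucc) (w t.succ)

/-- `(i_1, …, i_{k+1})` is a `P`-cycle. -/
def IsPCycle {ι : Type*} (P : Matrix ι ι ℝ) {k : ℕ} (w : Fin (k + 1) → ι) : Prop :=
  IsPWord P w ∧ 0 < P (w (Fin.last k)) (w 0)

/-- `(i_1, …, i_{k+1})` is a `(ν, P)`-cycle. -/
def IsNuPCycle {ι : Type*} (ν : ι → ℝ) (P : Matrix ι ι ℝ) {k : ℕ}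
    (w : Fin (k + 1) → ι) : Prop :=
  IsPCycle P w ∧ 0 < ν (w 0)

/-- `P` is strongly connected: its directed graph (positive entries) is strongly connected. -/
def StronglyConnected {ι : Type*} (P : Matrix ι ι ℝ) : Prop :=
  ∀ i j : ι, ∃ (k : ℕ) (w : Fin (k + 1) → ι), w 0 = i ∧ w (Fin.last k) = j ∧ IsPWord P w

/-- The `N`-tuple `A` is irreducible. -/
def IrredTuple {d : ℕ} {ι : Type*} (A : ι → Matrix (Fin d) (Fin d) ℝ) : Prop :=
  ∀ V : Submodule ℝ (Fin d → ℝ), (∀ i, ∀ x ∈ V, (A i).mulVec x ∈ V) → V = ⊥ ∨ V = ⊤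

/-- `nB` is a Barabanov norm for `A`. -/
structure IsBarabanovNorm {d : ℕ} {ι : Type*} [Fintype ι]
    (A : ι → Matrix (Fin d) (Fin d) ℝ) (nB : (Fin d → ℝ) → ℝ) : Prop where
  nonneg : ∀ x, 0 ≤ nB x
  eq_zero_iff : ∀ x, nB x = 0 ↔ x = 0
  add_le : ∀ x y, nB (x + y) ≤ nB x + nB y
  smul : ∀ (c : ℝ) (x), nB (c • x) = |c| * nB x
  extremal : ∀ i x, nB ((A i).mulVec x) ≤ jsr A * nB x
  attain : ∀ (x : Fin d → ℝ) (k : ℕ), ∃ σ : ℕ → ι,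
    nB ((prodW A fun t : Fin k => σ (t.1 + 1)).mulVec x) = jsr A ^ k * nB x

/-- Matrix norm induced by the vector norm `nB`. -/
def indNorm {d : ℕ} (nB : (Fin d → ℝ) → ℝ) (M : Matrix (Fin d) (Fin d) ℝ) : ℝ :=
  sSup {r | ∃ x, nB x = 1 ∧ r = nB (M.mulVec x)}

/-- Stochastic tensor of order `m + 2` (a Markov chain of order `m + 1`). -/
def IsStochasticTensor {N m : ℕ} (P : (Fin (m + 1) → Fin N) → Fin N → ℝ) : Prop :=
  (∀ u j, 0 ≤ P u j) ∧ ∀ u, ∑ j, P u j = 1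

/-- Shift-invariant probability tensor for the order-`m + 1` chain `P`. -/
def IsInvProbTensor {N m : ℕ} (ν : (Fin (m + 1) → Fin N) → ℝ)
    (P : (Fin (m + 1) → Fin N) → Fin N → ℝ) : Prop :=
  (∀ u, 0 ≤ ν u) ∧ (∑ u, ν u = 1) ∧
    ∀ u : Fin (m + 1) → Fin N,
      ∑ i : Fin N, ν (Fin.cons i (Fin.init u)) *
        P (Fin.cons i (Fin.init u)) (u (Fin.last m)) = ν u

/-- Probabilistic joint spectral radius for a Markov chain of order `m + 1`. -/
def rhoPTensor {d N m : ℕ} (ν : (Fin (m + 1) → Fin N) → ℝ)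
    (P : (Fin (m + 1) → Fin N) → Fin N → ℝ)
    (A : Fin N → Matrix (Fin d) (Fin d) ℝ) : ℝ :=
  Filter.atTop.limsup fun n : ℕ =>
    ∑ w : Fin (n + m + 2) → Fin N,
      (ν (fun j : Fin (m + 1) => w ⟨j.1, by omega⟩) *
        ∏ t : Fin (n + 1),
          P (fun j : Fin (m + 1) => w ⟨t.1 + j.1, by omega⟩) (w ⟨t.1 + m + 1, by omega⟩)) *
      ‖prodW A w‖ ^ (((n : ℝ) + m + 2)⁻¹)

/-- `ρ_p(m, A)`: supremum over all order-`m + 1` Markov chains. -/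
def rhoPTensorSup {d N : ℕ} (m : ℕ) (A : Fin N → Matrix (Fin d) (Fin d) ℝ) : ℝ :=
  sSup {r | ∃ ν P, IsStochasticTensor P ∧ IsInvProbTensor ν P ∧ r = rhoPTensor (m := m) ν P A}



/-! On the standard basis `A₁` and `A₂` act as partial maps along the cycle `e₁ → e₃ → e₂ → e₁`:
`A₂` is the only one defined at `e₁` and `A₁` the only one defined at `e₂, e₃`. Hence a product
`A_{i_n} ⋯ A_{i_1}` is nonzero only if the word is read off this cycle from some starting vertex;
all products have norm at most 1, and the words read off the cycle have products of norm 1, so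
`ρ_d = 1`. A word read off the cycle makes the transitions `2 → 1`, `1 → 1`, `1 → 2` once in every
three steps, so its Markov weight is at most `(p₂₁ p₁₁ p₁₂)^⌊n/3⌋ ≤ 4^(-⌊n/3⌋)`, and the sums
defining `ρ_p(ν, P, A)` tend to 0. -/

open Matrix Finset Filter

section Products

variable {d : ℕ} {ι : Type*}

theorem prodW_succ (A : ι → Matrix (Fin d) (Fin d) ℝ) {n : ℕ} (w : Fin (n + 1) → ι) :
    prodW A w = A (w (Fin.last n)) * prodW A (Fin.init w) := by
  rw [prodW, prodW, List.ofFn_succ', List.map_concat, List.concat_eq_append, List.reverse_append]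
  simp only [List.reverse_cons, List.reverse_nil, List.nil_append]
  rfl

theorem norm_prodW_le_one {A : ι → Matrix (Fin d) (Fin d) ℝ} (hA : ∀ i, ‖A i‖ ≤ 1) :
    ∀ {n : ℕ} (w : Fin (n + 1) → ι), ‖prodW A w‖ ≤ 1
  | 0, w => by simpa [prodW] using hA (w 0)
  | n + 1, w => by
    rw [prodW_succ]
    exact (norm_mul_le _ _).trans (mul_le_one₀ (hA _) (norm_nonneg _) (norm_prodW_le_one hA _))

theorem jsr_eq_one [Fintype ι] {A : ι → Matrix (Fin d) (Fin d) ℝ} (hA : ∀ i, ‖A i‖ ≤ 1)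
    (hattain : ∀ n, ∃ w : Fin (n + 1) → ι, 1 ≤ ‖prodW A w‖) : jsr A = 1 := by
  have hsup (n : ℕ) : ⨆ w : Fin (n + 1) → ι, ‖prodW A w‖ ^ (((n : ℝ) + 1)⁻¹) = 1 := by
    obtain ⟨w, hw⟩ := hattain n
    have : Nonempty (Fin (n + 1) → ι) := ⟨w⟩
    refine le_antisymm (ciSup_le fun v => ?_) ?_
    · exact Real.rpow_le_one (norm_nonneg _) (norm_prodW_le_one hA v) (by positivity)
    · exact le_ciSup_of_le (Set.finite_range _).bddAbove w (Real.one_le_rpow hw (by positivity))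
  simp only [jsr, hsup, ciInf_const]

end Products

section Markov

variable {ι : Type*} [Fintype ι] {P : Matrix ι ι ℝ} {ν : ι → ℝ}

theorem IsStochastic.le_one (hP : IsStochastic P) (i j : ι) : P i j ≤ 1 :=
  hP.2 i ▸ single_le_sum (fun k _ => hP.1 i k) (mem_univ j)

theorem IsStochastic.mul_le_one_quarter [DecidableEq ι] (hP : IsStochastic P) (i : ι) {j k : ι}
    (hjk : j ≠ k) : P i j * P i k ≤ 1 / 4 := by
  have hsum : P i j + P i k ≤ 1 := by
    rw [← hP.2 i, ← sum_pair hjk]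
    exact sum_le_sum_of_subset_of_nonneg (subset_univ _) fun l _ _ => hP.1 i l
  nlinarith [sq_nonneg (P i j - P i k), hP.1 i j, hP.1 i k]

theorem IsInvProb.le_one (hν : IsInvProb ν P) (i : ι) : ν i ≤ 1 :=
  hν.2.1 ▸ single_le_sum (fun k _ => hν.1 k) (mem_univ i)

theorem chainWt_nonneg (hP : ∀ i j, 0 ≤ P i j) (hν : ∀ i, 0 ≤ ν i) {n : ℕ}
    (w : Fin (n + 1) → ι) : 0 ≤ chainWt ν P w :=
  mul_nonneg (hν _) (prod_nonneg fun _ _ => hP _ _)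

theorem isStochastic_one [DecidableEq ι] : IsStochastic (1 : Matrix ι ι ℝ) :=
  ⟨fun i j => by by_cases h : i = j <;> simp [one_apply, h], fun i => by simp [one_apply]⟩

theorem isInvProb_single_one [DecidableEq ι] (i : ι) :
    IsInvProb (Pi.single i 1) (1 : Matrix ι ι ℝ) :=
  ⟨fun j => by by_cases h : j = i <;> simp [h], by simp, fun j => by simp [one_apply]⟩

theorem rhoPsup_eq_of_forall_rhoP_eq [DecidableEq ι] [Nonempty ι] {d : ℕ}
    {A : ι → Matrix (Fin d) (Fin d) ℝ} {r : ℝ}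
    (h : ∀ ν P, IsStochastic P → IsInvProb ν P → rhoP ν P A = r) : rhoPsup A = r := by
  have hset : {r' | ∃ ν P, IsStochastic P ∧ IsInvProb ν P ∧ r' = rhoP ν P A} = {r} := by
    ext r'
    refine ⟨fun ⟨ν, P, hP, hν, hr'⟩ => hr'.trans (h ν P hP hν), fun hr' => ?_⟩
    obtain ⟨i⟩ := ‹Nonempty ι›
    exact ⟨_, _, isStochastic_one, isInvProb_single_one i,
      hr'.trans (h _ _ isStochastic_one (isInvProb_single_one i)).symm⟩
  rw [rhoPsup, hset, csSup_singleton]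

end Markov

theorem prod_range_le_pow_of_periodic {g : ℕ → ℝ} {p : ℕ} (hg : Function.Periodic g p)
    (h0 : ∀ t, 0 ≤ g t) (h1 : ∀ t, g t ≤ 1) (n : ℕ) :
    ∏ t ∈ range n, g t ≤ (∏ t ∈ range p, g t) ^ (n / p) := by
  have hblocks (m : ℕ) : ∏ t ∈ range (p * m), g t = (∏ t ∈ range p, g t) ^ m := by
    induction m with
    | zero => simp
    | succ m ih =>
      rw [Nat.mul_succ, prod_range_add, ih, pow_succ]
      congr 1
      refine prod_congr rfl fun t _ => ?_
      simpa [add_comm, mul_comm] using hg.nat_mul m t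
  calc ∏ t ∈ range n, g t
      = (∏ t ∈ range (p * (n / p)), g t) * ∏ t ∈ range (n % p), g (p * (n / p) + t) := by
        rw [← prod_range_add, Nat.div_add_mod]
    _ ≤ (∏ t ∈ range p, g t) ^ (n / p) * 1 := by
        rw [hblocks]
        exact mul_le_mul_of_nonneg_left (prod_le_one (fun _ _ => h0 _) fun _ _ => h1 _)
          (pow_nonneg (prod_nonneg fun _ _ => h0 _) _)
    _ = (∏ t ∈ range p, g t) ^ (n / p) := mul_one _

namespace CycleExample

def mats : Fin 2 → Matrix (Fin 3) (Fin 3) ℝ :=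
  ![!![0, 1, 0; 0, 0, 1; 0, 0, 0], !![0, 0, 0; 0, 0, 0; 1, 0, 0]]

-- Indices start at 0 here: the cycle of the header is `e₀ → e₂ → e₁ → e₀`, with letter 1 at `e₀`.
def next (j : Fin 3) : Fin 3 := j - 1

def letter (j : Fin 3) : Fin 2 := if j = 0 then 1 else 0

def word (j : Fin 3) (n : ℕ) : Fin n → Fin 2 := fun t => letter (next^[t] j)

theorem iterate_next_three (j : Fin 3) : next^[3] j = j := by
  fin_cases j <;> rfl

theorem norm_mats_le_one (i : Fin 2) : ‖mats i‖ ≤ 1 := by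
  fin_cases i <;> simp [mats, linfty_opNorm_def, Fin.univ_succ]

theorem mats_mulVec_single (i : Fin 2) (j : Fin 3) :
    mats i *ᵥ Pi.single j 1 = if letter j = i then Pi.single (next j) 1 else 0 := by
  fin_cases i <;> fin_cases j <;> ext a <;> fin_cases a <;> simp [mats, letter, next]

theorem prodW_mulVec_single {n : ℕ} (w : Fin n → Fin 2) (j : Fin 3) :
    prodW mats w *ᵥ Pi.single j 1 = if w = word j n then Pi.single (next^[n] j) 1 else 0 := by
  induction n with
  | zero =>
    simp only [prodW, List.ofFn_zero, List.map_nil, List.reverse_nil, List.prod_nil, one_mulVec,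
      if_pos (Subsingleton.elim w _), Function.iterate_zero, id]
  | succ n ih =>
    have hword : w = word j (n + 1) ↔
        Fin.init w = word j n ∧ letter (next^[n] j) = w (Fin.last n) := by
      simp only [funext_iff, Fin.forall_fin_succ' (n := n), Fin.init, word, Fin.val_castSucc,
        Fin.val_last, eq_comm (a := letter _)]
    rw [prodW_succ, ← mulVec_mulVec, ih]
    by_cases hinit : Fin.init w = word j n
    · rw [if_pos hinit, mats_mulVec_single, Function.iterate_succ_apply']
      simp only [hword, hinit, true_and]
    · rw [if_neg hinit, mulVec_zero]
      simp only [hword, hinit, false_and, if_false]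

theorem exists_eq_word_of_prodW_ne_zero {n : ℕ} {w : Fin n → Fin 2} (h : prodW mats w ≠ 0) :
    ∃ j, w = word j n := by
  by_contra! hw
  exact h (ext_of_mulVec_single fun j => by rw [prodW_mulVec_single, if_neg (hw j), zero_mulVec])

theorem one_le_norm_prodW_word (j : Fin 3) (n : ℕ) : 1 ≤ ‖prodW mats (word j n)‖ := by
  have := linfty_opNorm_mulVec (prodW mats (word j n)) (Pi.single j 1)
  rwa [prodW_mulVec_single, if_pos rfl, Pi.norm_single, Pi.norm_single, norm_one, mul_one] at this

theorem jsr_mats : jsr mats = 1 :=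
  jsr_eq_one norm_mats_le_one fun n => ⟨word 0 (n + 1), one_le_norm_prodW_word 0 (n + 1)⟩

variable {P : Matrix (Fin 2) (Fin 2) ℝ} {ν : Fin 2 → ℝ}

theorem chainWt_word_le (hP : IsStochastic P) (hν : IsInvProb ν P) (j : Fin 3) (n : ℕ) :
    chainWt ν P (word j (n + 1)) ≤ (1 / 4) ^ (n / 3) := by
  set g : ℕ → ℝ := fun t => P (letter (next^[t] j)) (letter (next^[t + 1] j))
  have hper : Function.Periodic g 3 := fun t => by
    simp only [g, Function.iterate_add_apply, iterate_next_three]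
  have hg0 : ∀ t, 0 ≤ g t := fun t => hP.1 _ _
  have hcycle : ∏ t ∈ range 3, g t = P 1 0 * (P 0 0 * P 0 1) := by
    fin_cases j <;> simp +decide [g, prod_range_succ, letter, next] <;> ring
  have hcycle_le : ∏ t ∈ range 3, g t ≤ 1 / 4 := hcycle ▸
    (mul_le_of_le_one_left (mul_nonneg (hP.1 0 0) (hP.1 0 1)) (hP.le_one 1 0)).trans
      (hP.mul_le_one_quarter 0 (by decide))
  calc chainWt ν P (word j (n + 1)) = ν (letter j) * ∏ t ∈ range n, g t := by
        rw [chainWt, ← Fin.prod_univ_eq_prod_range]; rfl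
    _ ≤ 1 * (∏ t ∈ range 3, g t) ^ (n / 3) :=
        mul_le_mul (hν.le_one _) (prod_range_le_pow_of_periodic hper hg0 (fun _ => hP.le_one _ _) n)
          (prod_nonneg fun _ _ => hg0 _) zero_le_one
    _ ≤ (1 / 4) ^ (n / 3) := by
        rw [one_mul]; exact pow_le_pow_left₀ (prod_nonneg fun _ _ => hg0 _) hcycle_le _

theorem sum_chainWt_mul_norm_prodW_le (hP : IsStochastic P) (hν : IsInvProb ν P) (n : ℕ) :
    ∑ w : Fin (n + 1) → Fin 2, chainWt ν P w * ‖prodW mats w‖ ^ (((n : ℝ) + 1)⁻¹) ≤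
      3 * (1 / 4) ^ (n / 3) := by
  set f : (Fin (n + 1) → Fin 2) → ℝ := fun w => chainWt ν P w * ‖prodW mats w‖ ^ (((n : ℝ) + 1)⁻¹)
  have hf0 (w) : 0 ≤ f w := mul_nonneg (chainWt_nonneg hP.1 hν.1 w) (by positivity)
  have hf_le (w) : f w ≤ chainWt ν P w :=
    mul_le_of_le_one_right (chainWt_nonneg hP.1 hν.1 w)
      (Real.rpow_le_one (norm_nonneg _) (norm_prodW_le_one norm_mats_le_one w) (by positivity))
  have hsupp (w) (hw : w ∉ univ.image fun j => word j (n + 1)) : f w = 0 := by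
    have : prodW mats w = 0 := by
      by_contra h
      obtain ⟨j, rfl⟩ := exists_eq_word_of_prodW_ne_zero h
      exact hw (mem_image_of_mem _ (mem_univ j))
    simp only [f, this, norm_zero, Real.zero_rpow (by positivity : ((n : ℝ) + 1)⁻¹ ≠ 0), mul_zero]
  calc ∑ w, f w = ∑ w ∈ univ.image fun j => word j (n + 1), f w :=
        (sum_subset (subset_univ _) fun w _ hw => hsupp w hw).symm
    _ ≤ ∑ j : Fin 3, f (word j (n + 1)) := sum_image_le_of_nonneg fun w _ => hf0 w
    _ ≤ ∑ _j : Fin 3, (1 / 4 : ℝ) ^ (n / 3) :=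
        sum_le_sum fun j _ => (hf_le _).trans (chainWt_word_le hP hν j n)
    _ = 3 * (1 / 4) ^ (n / 3) := by simp

theorem rhoP_mats (hP : IsStochastic P) (hν : IsInvProb ν P) : rhoP ν P mats = 0 := by
  refine Tendsto.limsup_eq (squeeze_zero (fun n => sum_nonneg fun w _ => ?_)
    (sum_chainWt_mul_norm_prodW_le hP hν) ?_)
  · exact mul_nonneg (chainWt_nonneg hP.1 hν.1 w) (by positivity)
  · have hpow := tendsto_pow_atTop_nhds_zero_of_lt_one (r := (1 / 4 : ℝ)) (by norm_num) (by norm_num)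
    simpa using (hpow.comp (Nat.tendsto_div_const_atTop (by norm_num : (3 : ℕ) ≠ 0))).const_mul 3

end CycleExample

/-- an explicit pair of `3 × 3` matrices with `ρ_d(A) = 1` and
`ρ_p(ν, P, A) = 0` for every Markov chain `(ν, P)`, so that `ρ_p(A) = 0 < ρ_d(A)`. -/
theorem example_rhoPsup_lt_jsr :
    jsr ![(!![0, 1, 0; 0, 0, 1; 0, 0, 0] : Matrix (Fin 3) (Fin 3) ℝ),
         (!![0, 0, 0; 0, 0, 0; 1, 0, 0] : Matrix (Fin 3) (Fin 3) ℝ)] = 1 ∧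
      (∀ (P : Matrix (Fin 2) (Fin 2) ℝ) (ν : Fin 2 → ℝ),
        IsStochastic P → IsInvProb ν P →
        rhoP ν P ![(!![0, 1, 0; 0, 0, 1; 0, 0, 0] : Matrix (Fin 3) (Fin 3) ℝ),
                   (!![0, 0, 0; 0, 0, 0; 1, 0, 0] : Matrix (Fin 3) (Fin 3) ℝ)] = 0) ∧
      rhoPsup ![(!![0, 1, 0; 0, 0, 1; 0, 0, 0] : Matrix (Fin 3) (Fin 3) ℝ),
                (!![0, 0, 0; 0, 0, 0; 1, 0, 0] : Matrix (Fin 3) (Fin 3) ℝ)] = 0 :=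
  ⟨CycleExample.jsr_mats, fun _ _ hP hν => CycleExample.rhoP_mats hP hν,
    rhoPsup_eq_of_forall_rhoP_eq fun _ _ hP hν => CycleExample.rhoP_mats hP hν⟩

end JSRpaper
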